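/- With A_τ = e^{Aτ} for the n×n nilpotent superdiagonal matrix A, C = e_1^T, and α_i = C(N,i)(−1)^i, the aggregated row vector satisfies Σ_{i=0}^{N} α_i C A_τ^{N−i} = τ Σ_{m=1}^{n} γ_m^{(N)} e_m^T, where γ_m^{(N)} = (τ^{m−2}/(m−1)!) Σ_{i=0}^{N} C(N,i)(−1)^{N−i} i^{m−1}. In particular, this vector is zero if and only if N ≥ n. -/

import Mathlib

/-!
Since the superdiagonal matrix `A` is nilpotent, the first row of `e^{sA}` is `(s^j / j!)_j`,
and `(e^{τA})^k = e^{kτA}`. Hence the `j`-th entry of the combination is `τ^j / j!` times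
`∑ C(N,i) (-1)^(N-i) i^j`, the `N`-th forward difference of `x ↦ x^j` at `0`. That difference
vanishes for `j < N` and equals `N!` for `j = N`, so the row vanishes exactly when every index
`j < n` lies below `N`.
-/

open Finset

/-- The `n × n` nilpotent matrix with ones on the superdiagonal. -/
def superdiag (n : ℕ) : Matrix (Fin n) (Fin n) ℝ :=
  Matrix.of fun i j => if (i : ℕ) + 1 = (j : ℕ) then 1 else 0

/-- `γ_m^{(N)} = (τ^{m-2}/(m-1)!) ∑_{i=0}^N C(N,i) (-1)^{N-i} i^{m-1}`. -/
noncomputable def gammaCoef (τ : ℝ) (N m : ℕ) : ℝ :=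
  τ ^ ((m : ℤ) - 2) / ((m - 1).factorial : ℝ) *
    ∑ i ∈ Finset.range (N + 1), (N.choose i : ℝ) * (-1) ^ (N - i) * (i : ℝ) ^ (m - 1)

section Superdiag

variable {n : ℕ}

theorem superdiag_apply (i j : Fin n) :
    superdiag n i j = if (i : ℕ) + 1 = j then 1 else 0 := rfl

theorem superdiag_pow_apply (m : ℕ) (i j : Fin n) :
    (superdiag n ^ m) i j = if (i : ℕ) + m = j then 1 else 0 := by
  induction m generalizing j with
  | zero => simp [Matrix.one_apply, Fin.ext_iff]
  | succ m ih =>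
    rw [pow_succ, Matrix.mul_apply]
    simp only [ih, superdiag_apply, mul_ite, mul_one, mul_zero]
    by_cases h : (i : ℕ) + m < n
    · rw [sum_eq_single ⟨(i : ℕ) + m, h⟩ (fun k _ hk ↦ by grind) (by simp)]
      simp [add_assoc]
    · rw [sum_eq_zero (fun k _ ↦ by grind), if_neg (by omega)]

theorem superdiag_pow_eq_zero {m : ℕ} (h : n ≤ m) : superdiag n ^ m = 0 := by
  ext i j
  rw [superdiag_pow_apply, if_neg (by omega), Matrix.zero_apply]

theorem exp_smul_superdiag (s : ℝ) :
    NormedSpace.exp (s • superdiag n) =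
      ∑ m ∈ range n, (s ^ m / m.factorial) • superdiag n ^ m := by
  rw [NormedSpace.exp_eq_tsum ℝ]
  dsimp only
  rw [tsum_eq_sum (s := range n) fun m hm ↦ by
    rw [smul_pow, superdiag_pow_eq_zero (by simpa using hm), smul_zero, smul_zero]]
  refine sum_congr rfl fun m _ ↦ ?_
  rw [smul_pow, smul_smul, div_eq_inv_mul]

theorem exp_smul_superdiag_apply (s : ℝ) (i j : Fin n) :
    NormedSpace.exp (s • superdiag n) i j =
      if (i : ℕ) ≤ j then s ^ ((j : ℕ) - i) / ((j : ℕ) - i).factorial else 0 := by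
  simp only [exp_smul_superdiag, Matrix.sum_apply, Matrix.smul_apply, superdiag_pow_apply,
    smul_eq_mul, mul_ite, mul_one, mul_zero]
  split_ifs with h
  · rw [sum_eq_single ((j : ℕ) - i) (fun m _ hm ↦ if_neg (by omega)) (fun hm ↦ by
      simp at hm; omega), if_pos (by omega)]
  · exact sum_eq_zero fun m _ ↦ if_neg (by omega)

theorem exp_smul_superdiag_pow (s : ℝ) (k : ℕ) :
    NormedSpace.exp (s • superdiag n) ^ k = NormedSpace.exp ((k * s) • superdiag n) := by
  rw [← Matrix.exp_nsmul, ← Nat.cast_smul_eq_nsmul ℝ, smul_smul]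

end Superdiag

open fwdDiff

theorem fwdDiff_iter_pow_apply_zero {R : Type*} [CommRing R] (N j : ℕ) :
    (Δ_[1])^[N] (fun r : R ↦ r ^ j) 0 =
      ∑ i ∈ range (N + 1), (N.choose i : R) * (-1) ^ (N - i) * (i : R) ^ j := by
  rw [fwdDiff_iter_eq_sum_shift]
  refine sum_congr rfl fun i _ ↦ ?_
  simp only [zero_add, nsmul_eq_mul, mul_one, zsmul_eq_mul]
  push_cast
  ring

theorem sum_choose_smul_exp_superdiag_pow_apply {n : ℕ} (hn : 0 < n) (N : ℕ) (τ : ℝ)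
    (j : Fin n) :
    (∑ i ∈ range (N + 1), ((N.choose i : ℝ) * (-1) ^ i) •
        NormedSpace.exp (τ • superdiag n) ^ (N - i)) ⟨0, hn⟩ j =
      τ ^ (j : ℕ) / (j : ℕ).factorial * (Δ_[1])^[N] (fun r : ℝ ↦ r ^ (j : ℕ)) 0 := by
  simp only [Matrix.sum_apply, Matrix.smul_apply, exp_smul_superdiag_pow,
    exp_smul_superdiag_apply, Nat.zero_le, if_true, Nat.sub_zero, smul_eq_mul,
    fwdDiff_iter_pow_apply_zero, mul_sum]
  rw [← sum_range_reflect]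
  refine sum_congr rfl fun i hi ↦ ?_
  have hiN : i ≤ N := Nat.lt_succ_iff.1 (mem_range.1 hi)
  rw [Nat.add_sub_cancel, Nat.choose_symm hiN, Nat.sub_sub_self hiN]
  ring

theorem mul_gammaCoef_succ {τ : ℝ} (hτ : τ ≠ 0) (N m : ℕ) :
    τ * gammaCoef τ N (m + 1) =
      τ ^ m / m.factorial * (Δ_[1])^[N] (fun r : ℝ ↦ r ^ m) 0 := by
  have hexp : ((m + 1 : ℕ) : ℤ) - 2 = (m : ℤ) - 1 := by push_cast; ring
  rw [gammaCoef, fwdDiff_iter_pow_apply_zero, Nat.add_sub_cancel, hexp, zpow_sub₀ hτ,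
    zpow_one, zpow_natCast]
  field_simp

theorem stmt_14_general (n N : ℕ) (hn : 0 < n) (τ : ℝ) (hτ : τ ≠ 0) :
    ((∑ i ∈ Finset.range (N + 1),
        ((N.choose i : ℝ) * (-1) ^ i) •
          (NormedSpace.exp (τ • superdiag n)) ^ (N - i)) ⟨0, hn⟩ =
      τ • ∑ m : Fin n, gammaCoef τ N ((m : ℕ) + 1) • (Pi.single m (1 : ℝ) : Fin n → ℝ)) ∧
    ((∑ i ∈ Finset.range (N + 1),
        ((N.choose i : ℝ) * (-1) ^ i) •
          (NormedSpace.exp (τ • superdiag n)) ^ (N - i)) ⟨0, hn⟩ = 0 ↔ n ≤ N) := by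
  have hrow := sum_choose_smul_exp_superdiag_pow_apply hn N τ
  refine ⟨funext fun j ↦ ?_, ⟨fun h0 ↦ ?_, fun hnN ↦ funext fun j ↦ ?_⟩⟩
  · simp [hrow, Pi.single_apply, mul_gammaCoef_succ hτ]
  · by_contra! hNn
    have hcoord := congr_fun h0 ⟨N, hNn⟩
    rw [hrow, fwdDiff_iter_eq_factorial] at hcoord
    simp [hτ, Nat.factorial_ne_zero] at hcoord
  · rw [hrow, fwdDiff_iter_pow_eq_zero_of_lt (by omega), Pi.zero_apply, mul_zero, Pi.zero_apply]

theorem stmt_14 (n N : ℕ) (hn : 0 < n) (hN : 1 ≤ N) (τ : ℝ) (hτ : τ ≠ 0) :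
    ((∑ i ∈ Finset.range (N + 1),
        ((N.choose i : ℝ) * (-1) ^ i) •
          (NormedSpace.exp (τ • superdiag n)) ^ (N - i)) ⟨0, hn⟩ =
      τ • ∑ m : Fin n, gammaCoef τ N ((m : ℕ) + 1) • (Pi.single m (1 : ℝ) : Fin n → ℝ)) ∧
    ((∑ i ∈ Finset.range (N + 1),
        ((N.choose i : ℝ) * (-1) ^ i) •
          (NormedSpace.exp (τ • superdiag n)) ^ (N - i)) ⟨0, hn⟩ = 0 ↔ n ≤ N) :=
  stmt_14_general n N hn τ hτ
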